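/- Let α ∈ F and N₀ ∈ ℕ. Suppose that for every n ∈ ℕ with n ≥ N₀ there exist p_n, q_n ∈ Λ such that |q_n α − p_n| < 1/e^{n+1} and 1 ≤ |q_n| < e^{n−1}. Then α ∈ F_q(T), i.e. α is a rational function. -/

import Mathlib

/- Setting: `Λ = Fq[T]` is the polynomial ring over a finite field `Fq` and
`F = RatFunc.CompletionAtInfty Fq = Fq((T⁻¹))` is the completion of `Fq(T)` at the place at infinity,
i.e. the field of formal Laurent series in `T⁻¹`, with absolute value
`|a| = e^(deg a)` (`|0| = 0`). -/

set_option linter.unusedSectionVars false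

local notation "ℤₘ₀" => WithZero (Multiplicative ℤ)

noncomputable section

open FunctionField Polynomial Multiplicative

variable (Fq : Type) [Field Fq] [Fintype Fq] [DecidableEq (RatFunc Fq)]

/-- The embedding of the rational function field `Fq(T)` into its completion
`F = Fq((T⁻¹))` at the place at infinity. -/
def ratEmb : RatFunc Fq →+* RatFunc.CompletionAtInfty Fq :=
  letI := RatFunc.inftyValued Fq
  UniformSpace.Completion.coeRingHom

/-- The embedding of `Λ = Fq[T]` into `F = Fq((T⁻¹))`. -/
def polyEmb : Polynomial Fq →+* RatFunc.CompletionAtInfty Fq :=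
  (ratEmb Fq).comp (algebraMap (Polynomial Fq) (RatFunc Fq))

/-- The real-valued absolute value `|a| = e^(deg a)` on `F = Fq((T⁻¹))`,
with `|0| = 0`, obtained from the valuation at infinity. -/
def fabs (x : RatFunc.CompletionAtInfty Fq) : ℝ :=
  if h : Valued.v x = (0 : WithZero (Multiplicative ℤ)) then 0 else
    Real.exp ((Multiplicative.toAdd (WithZero.unzero h) : ℤ))

/-- The degree of a Laurent series (with the junk convention `deg 0 = 0`). -/
def fdeg (x : RatFunc.CompletionAtInfty Fq) : ℤ :=
  if h : Valued.v x = (0 : WithZero (Multiplicative ℤ)) then 0 else Multiplicative.toAdd (WithZero.unzero h)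


lemma v_ratEmb (r : RatFunc Fq) : Valued.v (ratEmb Fq r) = RatFunc.inftyValuationDef Fq r := by
  letI := RatFunc.inftyValued Fq
  exact Valued.valuedCompletion_apply r

lemma v_polyEmb {p : Polynomial Fq} (hp : p ≠ 0) :
    Valued.v (polyEmb Fq p) = ((Multiplicative.ofAdd (p.natDegree : ℤ) : Multiplicative ℤ) : ℤₘ₀) := by
  rw [polyEmb, RingHom.comp_apply, v_ratEmb, RatFunc.inftyValuation.polynomial Fq hp,
    WithZero.exp_eq_coe_ofAdd]

lemma fabs_lt_exp_iff (x : RatFunc.CompletionAtInfty Fq) (m : ℤ) :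
    fabs Fq x < Real.exp m ↔ Valued.v x < ((Multiplicative.ofAdd m : Multiplicative ℤ) : ℤₘ₀) := by
  unfold fabs
  split_ifs with h
  · simp [h, Real.exp_pos, WithZero.zero_lt_coe]
  · rw [Real.exp_lt_exp, Int.cast_lt]
    conv_rhs => rw [← WithZero.coe_unzero h]
    rw [WithZero.coe_lt_coe]
    exact Multiplicative.toAdd_lt

lemma exp_le_fabs_iff (x : RatFunc.CompletionAtInfty Fq) (m : ℤ) :
    Real.exp m ≤ fabs Fq x ↔ ((Multiplicative.ofAdd m : Multiplicative ℤ) : ℤₘ₀) ≤ Valued.v x := by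
  unfold fabs
  split_ifs with h
  · simp [h, (Real.exp_pos (m:ℝ)).not_ge, le_zero_iff]
  · rw [Real.exp_le_exp, Int.cast_le]
    conv_rhs => rw [← WithZero.coe_unzero h]
    rw [WithZero.coe_le_coe]
    exact Multiplicative.toAdd_le

lemma one_le_v_polyEmb {p : Polynomial Fq} (hp : p ≠ 0) :
    (1 : ℤₘ₀) ≤ Valued.v (polyEmb Fq p) := by
  rw [v_polyEmb Fq hp, ← WithZero.coe_one, WithZero.coe_le_coe, ← ofAdd_zero,
    Multiplicative.ofAdd_le]
  exact Int.natCast_nonneg _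

/-- If for every `n ≥ N₀` there are `p_n, q_n ∈ Λ` with
`|q_n α − p_n| < 1/e^(n+1)` and `1 ≤ |q_n| < e^(n−1)`, then `α` is a rational
function, i.e. `α ∈ Fq(T)`. -/
theorem stmt6 (α : RatFunc.CompletionAtInfty Fq) (N₀ : ℕ)
    (h : ∀ n : ℕ, N₀ ≤ n →
      ∃ p q : Polynomial Fq,
        fabs Fq (polyEmb Fq q * α - polyEmb Fq p) < 1 / Real.exp ((n : ℝ) + 1) ∧
        1 ≤ fabs Fq (polyEmb Fq q) ∧ fabs Fq (polyEmb Fq q) < Real.exp ((n : ℝ) - 1)) :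
    ∃ r : RatFunc Fq, α = ratEmb Fq r := by
  have h' : ∀ k : ℕ, ∃ p q : Polynomial Fq,
      fabs Fq (polyEmb Fq q * α - polyEmb Fq p) < 1 / Real.exp ((↑(N₀+k) : ℝ) + 1) ∧
      1 ≤ fabs Fq (polyEmb Fq q) ∧ fabs Fq (polyEmb Fq q) < Real.exp ((↑(N₀+k) : ℝ) - 1) :=
    fun k => h (N₀+k) (Nat.le_add_right _ _)
  choose p q hA hB hC using h'
  have vA : ∀ k, Valued.v (polyEmb Fq (q k) * α - polyEmb Fq (p k)) <
      ((Multiplicative.ofAdd (-((N₀:ℤ)+k+1)) : Multiplicative ℤ) : ℤₘ₀) := by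
    intro k
    apply (fabs_lt_exp_iff Fq _ _).mp
    have he : Real.exp ((-((N₀:ℤ)+k+1) : ℤ) : ℝ) = 1 / Real.exp ((↑(N₀+k):ℝ)+1) := by
      rw [one_div, ← Real.exp_neg]; push_cast; ring_nf
    rw [he]; exact hA k
  have vB : ∀ k, (1:ℤₘ₀) ≤ Valued.v (polyEmb Fq (q k)) := by
    intro k
    have h0 : Real.exp ((0:ℤ):ℝ) ≤ fabs Fq (polyEmb Fq (q k)) := by
      rw [Int.cast_zero, Real.exp_zero]; exact hB k
    simpa using (exp_le_fabs_iff Fq _ 0).mp h0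
  have hq0 : ∀ k, q k ≠ 0 := by
    intro k hk
    have := vB k
    rw [hk, map_zero, map_zero] at this
    simp at this
  have vC : ∀ k, Valued.v (polyEmb Fq (q k)) <
      ((Multiplicative.ofAdd ((N₀:ℤ)+k-1) : Multiplicative ℤ) : ℤₘ₀) := by
    intro k
    apply (fabs_lt_exp_iff Fq _ _).mp
    have he : ((((N₀:ℤ)+k-1) : ℤ) : ℝ) = (↑(N₀+k):ℝ) - 1 := by push_cast; ring
    rw [he]; exact hC k
  have cross : ∀ k, q (k+1) * p k = q k * p (k+1) := by
    intro k
    have key : Valued.v (polyEmb Fq (q k * p (k+1) - q (k+1) * p k)) < 1 := by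
      have e : polyEmb Fq (q k * p (k+1) - q (k+1) * p k) =
          polyEmb Fq (q (k+1)) * (polyEmb Fq (q k) * α - polyEmb Fq (p k)) -
          polyEmb Fq (q k) * (polyEmb Fq (q (k+1)) * α - polyEmb Fq (p (k+1))) := by
        rw [map_sub, map_mul, map_mul]; ring
      rw [e]
      refine lt_of_le_of_lt (Valuation.map_sub _ _ _) ?_
      rw [max_lt_iff]
      constructor
      · rw [map_mul]
        calc Valued.v (polyEmb Fq (q (k+1))) * Valued.v (polyEmb Fq (q k) * α - polyEmb Fq (p k))
            < ((Multiplicative.ofAdd ((N₀:ℤ)+(k+1)-1) : Multiplicative ℤ) : ℤₘ₀) *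
              ((Multiplicative.ofAdd (-((N₀:ℤ)+k+1)) : Multiplicative ℤ) : ℤₘ₀) :=
              mul_lt_mul' (le_of_lt (by exact_mod_cast vC (k+1)))
                (vA k) zero_le' (WithZero.zero_lt_coe _)
          _ < 1 := by
              rw [← WithZero.coe_mul, ← WithZero.coe_one, WithZero.coe_lt_coe, ← ofAdd_add,
                ← ofAdd_zero, Multiplicative.ofAdd_lt]
              omega
      · rw [map_mul]
        calc Valued.v (polyEmb Fq (q k)) * Valued.v (polyEmb Fq (q (k+1)) * α - polyEmb Fq (p (k+1)))
            < ((Multiplicative.ofAdd ((N₀:ℤ)+k-1) : Multiplicative ℤ) : ℤₘ₀) *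
              ((Multiplicative.ofAdd (-((N₀:ℤ)+(k+1)+1)) : Multiplicative ℤ) : ℤₘ₀) :=
              mul_lt_mul' (le_of_lt (vC k))
                (by exact_mod_cast vA (k+1)) zero_le' (WithZero.zero_lt_coe _)
          _ < 1 := by
              rw [← WithZero.coe_mul, ← WithZero.coe_one, WithZero.coe_lt_coe, ← ofAdd_add,
                ← ofAdd_zero, Multiplicative.ofAdd_lt]
              omega
    have hz : q k * p (k+1) - q (k+1) * p k = 0 := by
      by_contra hne
      exact absurd key (not_lt.mpr (one_le_v_polyEmb Fq hne))
    exact (sub_eq_zero.mp hz).symm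
  set Q : ℕ → RatFunc Fq := fun k => algebraMap (Polynomial Fq) (RatFunc Fq) (q k) with hQ
  set P : ℕ → RatFunc Fq := fun k => algebraMap (Polynomial Fq) (RatFunc Fq) (p k) with hP
  have hQ0 : ∀ k, Q k ≠ 0 := by
    intro k
    simp only [hQ, Ne, FaithfulSMul.algebraMap_eq_zero_iff]
    exact hq0 k
  set r : RatFunc Fq := P 0 / Q 0 with hrdef
  have hr : ∀ k, Q k * r = P k := by
    intro k
    induction k with
    | zero => rw [hrdef, mul_comm, div_mul_cancel₀ _ (hQ0 0)]
    | succ k ih =>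
      have hmap : Q (k+1) * P k = Q k * P (k+1) := by
        have := congrArg (algebraMap (Polynomial Fq) (RatFunc Fq)) (cross k)
        rwa [map_mul, map_mul] at this
      apply mul_left_cancel₀ (hQ0 k)
      calc Q k * (Q (k+1) * r) = Q (k+1) * (Q k * r) := by ring
        _ = Q (k+1) * P k := by rw [ih]
        _ = Q k * P (k+1) := hmap
  refine ⟨r, ?_⟩
  have key2 : ∀ k : ℕ, Valued.v (α - ratEmb Fq r) <
      ((Multiplicative.ofAdd (-((N₀:ℤ)+k+1)) : Multiplicative ℤ) : ℤₘ₀) := by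
    intro k
    have h1 : polyEmb Fq (q k) * ratEmb Fq r = polyEmb Fq (p k) := by
      have : ratEmb Fq (Q k * r) = ratEmb Fq (P k) := congrArg _ (hr k)
      rwa [map_mul] at this
    have h2 : Valued.v (polyEmb Fq (q k) * (α - ratEmb Fq r)) <
        ((Multiplicative.ofAdd (-((N₀:ℤ)+k+1)) : Multiplicative ℤ) : ℤₘ₀) := by
      rw [mul_sub, h1]; exact vA k
    calc Valued.v (α - ratEmb Fq r)
        ≤ Valued.v (polyEmb Fq (q k)) * Valued.v (α - ratEmb Fq r) :=
          le_mul_of_one_le_left' (vB k)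
      _ = Valued.v (polyEmb Fq (q k) * (α - ratEmb Fq r)) := (map_mul _ _ _).symm
      _ < _ := h2
  have hv0 : Valued.v (α - ratEmb Fq r) = 0 := by
    by_contra hne
    obtain ⟨g, hg⟩ := WithZero.ne_zero_iff_exists.mp hne
    have hk := key2 (Multiplicative.toAdd g).natAbs
    rw [← hg, WithZero.coe_lt_coe] at hk
    have hk' : Multiplicative.toAdd g < -((N₀:ℤ) + (Multiplicative.toAdd g).natAbs + 1) :=
      Multiplicative.toAdd_lt.mpr hk
    omega
  exact sub_eq_zero.mp ((Valuation.zero_iff _).mp hv0)
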